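/- Let k_c be the critical coupling for existence of N-vortex solutions of the self-dual Chern-Simons equations on a flat torus Σ. Necessarily k_c ≤ (1/2)(|Σ|/(πN))^{1/2}; equivalently, if k² > |Σ|/(4πN) then the equations (11)–(12) with ∫_Σ F₁₂ = 2πN admit no solution with |φ| ≤ 1, because integrating k²F₁₂ = 2|φ|²(1-|φ|²) over Σ gives 2πNk² = 2∫_Σ |φ|²(1-|φ|²) ≤ 2·(1/4)·|Σ| = |Σ|/2. -/

import Mathlib

open MeasureTheory Real

/-! Integrating the Bogomolny equation `k² F = 2|φ|²(1 - |φ|²)` and using `t(1 - t) ≤ 1/4` pointwise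
gives `2πN k² = k² ∫ F ≤ |Σ|/2`, which contradicts `k² > |Σ|/(4πN)`. -/

lemma two_mul_mul_one_sub_le_half (t : ℝ) : 2 * t * (1 - t) ≤ 1 / 2 := by
  nlinarith [sq_nonneg (2 * t - 1)]

lemma integral_le_measureReal_univ_mul {X : Type*} [MeasurableSpace X] {μ : Measure X}
    [IsFiniteMeasure μ] {f : X → ℝ} {c : ℝ} (hf : Integrable f μ) (h : ∀ x, f x ≤ c) :
    ∫ x, f x ∂μ ≤ μ.real Set.univ * c := by
  simpa only [integral_const, smul_eq_mul] using integral_mono hf (integrable_const c) h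

lemma sq_mul_integral_le_of_bogomolny {X : Type*} [MeasurableSpace X] {μ : Measure X}
    [IsFiniteMeasure μ] {k : ℝ} {F : X → ℝ} {φ : X → ℂ} (hF : Integrable F μ)
    (hbog : ∀ x, k ^ 2 * F x = 2 * ‖φ x‖ ^ 2 * (1 - ‖φ x‖ ^ 2)) :
    k ^ 2 * ∫ x, F x ∂μ ≤ μ.real Set.univ / 2 := by
  rw [← integral_const_mul]
  calc ∫ x, k ^ 2 * F x ∂μ ≤ μ.real Set.univ * (1 / 2) :=
        integral_le_measureReal_univ_mul (hF.const_mul _)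
          fun x ↦ hbog x ▸ two_mul_mul_one_sub_le_half _
    _ = μ.real Set.univ / 2 := by ring

theorem stmt16_general {X : Type*} [MeasureSpace X]
    [IsFiniteMeasure (volume : Measure X)]
    (A : ℝ) (hvol : ((volume : Measure X) Set.univ).toReal = A)
    (N : ℕ) (hN : 0 < N) (k : ℝ) (hk2 : k^2 > A/(4*π*N)) :
    ¬ ∃ (F : X → ℝ) (φ : X → ℂ), Integrable F ∧
      (∀ x, ‖φ x‖ ≤ 1) ∧
      (∀ x, k^2 * F x = 2 * ‖φ x‖^2 * (1 - ‖φ x‖^2)) ∧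
      (∫ x, F x) = 2*π*N := by
  rintro ⟨F, φ, hF, -, hbog, hflux⟩
  have hbound := sq_mul_integral_le_of_bogomolny (μ := volume) hF hbog
  rw [hflux, measureReal_def, hvol] at hbound
  have hπN : 0 < 4 * π * N := by positivity
  rw [gt_iff_lt, div_lt_iff₀ hπN] at hk2
  linarith

/-- Necessary condition for existence of `N`-vortex solutions: if
`k² > |Σ|/(4πN)`, then there is no pair `(F, φ)` with `|φ| ≤ 1` satisfying the
Bogomolny equation `k²F₁₂ = 2|φ|²(1-|φ|²)` and the flux condition
`∫F₁₂ = 2πN`; equivalently `k_c ≤ (1/2)(|Σ|/(πN))^{1/2}`. -/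
theorem stmt16 {X : Type*} [MeasureSpace X]
    [IsFiniteMeasure (volume : Measure X)]
    (A : ℝ) (hA : 0 < A) (hvol : ((volume : Measure X) Set.univ).toReal = A)
    (N : ℕ) (hN : 0 < N) (k : ℝ) (hk : 0 < k) (hk2 : k^2 > A/(4*π*N)) :
    ¬ ∃ (F : X → ℝ) (φ : X → ℂ), Integrable F ∧
      (∀ x, ‖φ x‖ ≤ 1) ∧
      (∀ x, k^2 * F x = 2 * ‖φ x‖^2 * (1 - ‖φ x‖^2)) ∧
      (∫ x, F x) = 2*π*N :=
  stmt16_general A hvol N hN k hk2
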